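/- The odd-indexed q-Bernoulli numbers beyond the first vanish: b_{2r+1,q} = 0 for every integer r ≥ 1. -/

import Mathlib

open Finset PowerSeries

/-- The `q`-number `[n]_q = (1 - q^n)/(1 - q)`. -/
noncomputable def qNum (q : ℂ) (n : ℕ) : ℂ := (1 - q ^ n) / (1 - q)

/-- The `q`-factorial `[n]_q!`. -/
noncomputable def qFact (q : ℂ) : ℕ → ℂ
  | 0 => 1
  | n + 1 => qNum q (n + 1) * qFact q n

/-- The `q`-shifted factorial `(a; q)_n = ∏_{j=0}^{n-1} (1 - q^j a)`. -/
noncomputable def qShift (a q : ℂ) (n : ℕ) : ℂ := ∏ j ∈ Finset.range n, (1 - q ^ j * a)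

/-- The Gaussian binomial coefficient `[n choose k]_q = (q;q)_n / ((q;q)_{n-k} (q;q)_k)`. -/
noncomputable def qBinom (q : ℂ) (n k : ℕ) : ℂ :=
  qShift q q n / (qShift q q (n - k) * qShift q q k)

/-- The formal power series (in `t`) `𝓔_q(tx) = Σ_{n≥0} (-1;q)_n (x)^n t^n / (2^n [n]_q!)`. -/
noncomputable def qExp (q x : ℂ) : PowerSeries ℂ :=
  PowerSeries.mk fun n => qShift (-1) q n * x ^ n / (2 ^ n * qFact q n)

/-- The generating series `Σ_{n≥0} a_n t^n / [n]_q!` of a sequence `a`. -/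
noncomputable def qGen (q : ℂ) (a : ℕ → ℂ) : PowerSeries ℂ :=
  PowerSeries.mk fun n => a n / qFact q n

/-- The `q`-addition `(x ⊕_q y)^n`. -/
noncomputable def qAdd (q x y : ℂ) (n : ℕ) : ℂ :=
  ∑ k ∈ Finset.range (n + 1),
    qBinom q n k * (qShift (-1) q k * qShift (-1) q (n - k) / 2 ^ n) * x ^ k * y ^ (n - k)

/-!
The coefficient recurrence of `E(t) = 𝓔_q(t)` is the `q`-difference equation
`E(t) (1 - c t) = E(qt) (1 + c t)` with `c = (1 - q)/2`. Multiplying it by the same equation for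
`E(-t)` shows that `E(t) E(-t)` is invariant under `t ↦ qt`; since `|q| < 1`, `q` is not a root
of unity, which forces `E(t) E(-t) = 1`. Then `B(t) = t / (E(t) - 1)` satisfies
`B(-t) = -t / (E(t)⁻¹ - 1) = t E(t) / (E(t) - 1) = B(t) + t`,
so all odd coefficients of `B` except the first vanish.
-/

lemma pow_ne_one_of_not_isOfFinOrder {M : Type*} [Monoid M] {x : M} (hx : ¬IsOfFinOrder x)
    {n : ℕ} (hn : n ≠ 0) : x ^ n ≠ 1 :=
  fun h => hn (Nat.eq_zero_of_zero_dvd (orderOf_eq_zero hx ▸ orderOf_dvd_of_pow_eq_one h))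

namespace PowerSeries

variable {K : Type*} [Field K]

lemma eq_C_of_rescale_eq {a : K} (ha : ¬IsOfFinOrder a) {f : K⟦X⟧} (hf : rescale a f = f) :
    f = C (constantCoeff f) := by
  ext n
  rcases eq_or_ne n 0 with rfl | hn
  · simp
  · have h : (a ^ n - 1) * coeff n f = 0 := by
      linear_combination (coeff_rescale f a n).symm.trans (congrArg (coeff n) hf)
    rw [coeff_C, if_neg hn]
    exact (mul_eq_zero.1 h).resolve_left (sub_ne_zero.2 (pow_ne_one_of_not_isOfFinOrder ha hn))

lemma rescale_neg_one_sub_eq_X {E B : K⟦X⟧} (hE : E * rescale (-1) E = 1)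
    (hB : B * (E - 1) = X) : rescale (-1) B - B = X := by
  have hE1 : E - 1 ≠ 0 := right_ne_zero_of_mul (hB ▸ X_ne_zero)
  have hneg := congrArg (rescale (-1)) hB
  rw [map_mul, map_sub, map_one, rescale_neg_one_X] at hneg
  refine mul_right_cancel₀ hE1 ?_
  linear_combination (-E) * hneg + rescale (-1) B * hE - hB

lemma coeff_eq_zero_of_rescale_neg_one_sub_eq_X [CharZero K] {B : K⟦X⟧}
    (hB : rescale (-1) B - B = X) {n : ℕ} (hn : Odd n) (hn1 : n ≠ 1) : coeff n B = 0 := by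
  have h := congrArg (coeff n) hB
  rw [map_sub, coeff_rescale, hn.neg_one_pow, coeff_X, if_neg hn1] at h
  linear_combination -h / 2

end PowerSeries

section

variable {q : ℂ}

lemma one_sub_pow_ne_zero (hq : ¬IsOfFinOrder q) {n : ℕ} (hn : n ≠ 0) : 1 - q ^ n ≠ 0 :=
  sub_ne_zero.2 (pow_ne_one_of_not_isOfFinOrder hq hn).symm

lemma qFact_ne_zero (hq : ¬IsOfFinOrder q) (n : ℕ) : qFact q n ≠ 0 := by
  induction n with
  | zero => simp [qFact]
  | succ n ih =>
    have h1 : 1 - q ≠ 0 := by simpa using one_sub_pow_ne_zero hq one_ne_zero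
    exact mul_ne_zero (div_ne_zero (one_sub_pow_ne_zero hq n.succ_ne_zero) h1) ih

lemma coeff_qExp (q x : ℂ) (n : ℕ) :
    coeff n (qExp q x) = qShift (-1) q n * x ^ n / (2 ^ n * qFact q n) :=
  coeff_mk _ _

lemma constantCoeff_qExp (q x : ℂ) : constantCoeff (qExp q x) = 1 := by
  simp [← coeff_zero_eq_constantCoeff_apply, coeff_qExp, qShift, qFact]

lemma rescale_qExp (q a x : ℂ) : rescale a (qExp q x) = qExp q (a * x) := by
  ext n
  simp only [coeff_rescale, coeff_qExp]
  ring

lemma qExp_mul_one_sub_eq_rescale_mul_one_add (hq : ¬IsOfFinOrder q) (x : ℂ) :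
    qExp q x * (1 - C ((1 - q) / 2 * x) * X) =
      rescale q (qExp q x) * (1 + C ((1 - q) / 2 * x) * X) := by
  ext n
  simp only [mul_sub, mul_add, mul_one, ← mul_assoc, map_sub, map_add, coeff_rescale]
  rcases n with _ | n
  · simp only [coeff_zero_mul_X, pow_zero, one_mul, sub_zero, add_zero]
  simp only [coeff_succ_mul_X, coeff_mul_C, coeff_rescale, coeff_qExp]
  have hqShift : qShift (-1) q (n + 1) = (1 + q ^ n) * qShift (-1) q n := by
    simp only [qShift, prod_range_succ]
    ring
  have hqFact : qFact q (n + 1) = (1 - q ^ (n + 1)) / (1 - q) * qFact q n := rfl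
  have h1 : 1 - q ≠ 0 := by simpa using one_sub_pow_ne_zero hq one_ne_zero
  have hn := one_sub_pow_ne_zero hq n.succ_ne_zero
  have hf := qFact_ne_zero hq n
  rw [hqShift, hqFact]
  field_simp
  ring

lemma qExp_mul_qExp_neg (hq : ¬IsOfFinOrder q) (x : ℂ) : qExp q x * qExp q (-x) = 1 := by
  set c := C ((1 - q) / 2 * x)
  have hpos := qExp_mul_one_sub_eq_rescale_mul_one_add hq x
  have hneg := qExp_mul_one_sub_eq_rescale_mul_one_add hq (-x)
  rw [mul_neg, map_neg, neg_mul, sub_neg_eq_add, ← sub_eq_add_neg] at hneg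
  have hu : (1 - c * X) * (1 + c * X) ≠ 0 := by
    refine mul_ne_zero ?_ ?_ <;> intro h <;> simpa using congrArg constantCoeff h
  have hinv : rescale q (qExp q x * qExp q (-x)) = qExp q x * qExp q (-x) := by
    refine mul_right_cancel₀ hu ?_
    rw [map_mul]
    linear_combination (-(qExp q (-x) * (1 + c * X))) * hpos -
      (rescale q (qExp q x) * (1 + c * X)) * hneg
  rw [eq_C_of_rescale_eq hq hinv, map_mul, constantCoeff_qExp, constantCoeff_qExp, mul_one, map_one]

end

theorem qBernoulli_odd_eq_zero_general (q : ℂ) (hq1 : ‖q‖ < 1)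
    (b : ℕ → ℂ) (hb : qGen q b * (qExp q 1 - 1) = PowerSeries.X)
    (r : ℕ) (hr : 1 ≤ r) :
    b (2 * r + 1) = 0 := by
  have hq : ¬IsOfFinOrder q := fun h => hq1.ne h.norm_eq_one
  have hE : qExp q 1 * rescale (-1) (qExp q 1) = 1 := by
    rw [rescale_qExp, mul_one]
    exact qExp_mul_qExp_neg hq 1
  have hodd := coeff_eq_zero_of_rescale_neg_one_sub_eq_X (rescale_neg_one_sub_eq_X hE hb)
    (odd_two_mul_add_one r) (by omega)
  rw [qGen, coeff_mk, div_eq_zero_iff] at hodd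
  exact hodd.resolve_right (qFact_ne_zero hq _)

/-- The odd-indexed `q`-Bernoulli numbers beyond the first vanish: `b_{2r+1,q} = 0` for `r ≥ 1`,
where the `q`-Bernoulli numbers are defined by `t/(𝓔_q(t)-1) = Σ_{n≥0} b_{n,q} t^n/[n]_q!`. -/
theorem qBernoulli_odd_eq_zero (q : ℂ) (hq0 : 0 < ‖q‖) (hq1 : ‖q‖ < 1)
    (b : ℕ → ℂ) (hb : qGen q b * (qExp q 1 - 1) = PowerSeries.X)
    (r : ℕ) (hr : 1 ≤ r) :
    b (2 * r + 1) = 0 :=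
  qBernoulli_odd_eq_zero_general q hq1 b hb r hr
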